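/- Let (D₁, D₂, D₃, c, g₁, g₂, g₃, ξ) be a BKL datum satisfying the BKL constraints, and suppose that g₁ > 0, g₂ < 0, g₃ < 0 and c_{23}^1 ≠ 0 at every point of ℝ³. Then there exist smooth functions A, B : ℝ³ → ℝ with A > 0 and B > 0 everywhere and a sign σ ∈ {−1, +1}, and these are unique, such that the transformed BKL datum given by ĝ_i = A g_i, D̂_i = σ A B^{g_j+g_k} D_i for cyclic (i,j,k) (where B^f = exp(f log B)), and ξ̂ = ξ + log A + (g₁+g₂+g₃) log B is in normal form; that is, there is a smooth u : ℝ³ → ℝ with u > 0 everywhere such that (ĝ₁, ĝ₂, ĝ₃) = (1/2, −(1+u)/2, −(1+1/u)/2) and the structure functions of the new frame satisfy ĉ_{23}^1 = −2 identically. Necessarily A = 1/(2g₁) and u = −(g₁+g₂)/g₁. -/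

import Mathlib

noncomputable section

/-- Points of `ℝ³`. -/
abbrev R3 : Type := Fin 3 → ℝ

/-- Lie bracket of vector fields on `ℝ³`:
`[X,Y](x) = (DY)_x(X(x)) − (DX)_x(Y(x))`. -/
def lieB (X Y : R3 → R3) : R3 → R3 :=
  fun x => fderiv ℝ Y x (X x) - fderiv ℝ X x (Y x)

/-- Directional derivative `X(f)(x) = (Df)_x(X(x))`. -/
def dirD (X : R3 → R3) (f : R3 → ℝ) : R3 → ℝ :=
  fun x => fderiv ℝ f x (X x)

/-- A frame: three smooth vector fields, linearly independent at every point. -/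
def IsFrame (D : Fin 3 → R3 → R3) : Prop :=
  (∀ i, ContDiff ℝ (⊤ : ℕ∞) (D i)) ∧ ∀ x : R3, LinearIndependent ℝ fun i => D i x

/-- `c` is the family of (smooth) structure functions of the frame `D`:
`[D j, D k] = ∑ i, c j k i • D i`.  Here `c j k i` stands for `c_{jk}^i`. -/
def IsStructFns (D : Fin 3 → R3 → R3) (c : Fin 3 → Fin 3 → Fin 3 → R3 → ℝ) : Prop :=
  (∀ j k i, ContDiff ℝ (⊤ : ℕ∞) (c j k i)) ∧
    ∀ j k, ∀ x : R3, lieB (D j) (D k) x = ∑ i, c j k i x • D i x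

/-- `(i,j,k)` is a cyclic permutation of `(1,2,3)` (as indices `(0,1,2)`). -/
def Cyclic (i j k : Fin 3) : Prop :=
  (i, j, k) = (0, 1, 2) ∨ (i, j, k) = (1, 2, 0) ∨ (i, j, k) = (2, 0, 1)

/-- The BKL constraint equations for the datum `(D, c, g, ξ)`. -/
def BKLConstraints (D : Fin 3 → R3 → R3) (c : Fin 3 → Fin 3 → Fin 3 → R3 → ℝ)
    (g : Fin 3 → R3 → ℝ) (ξ : R3 → ℝ) : Prop :=
  (∀ x : R3, g 1 x * g 2 x + g 2 x * g 0 x + g 0 x * g 1 x = 0) ∧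
    ∀ i j k : Fin 3, Cyclic i j k → ∀ x : R3,
      dirD (D i) (fun y => g j y + g k y) x + c i j j x * (g i x - g j x)
        + c i k k x * (g i x - g k x) - 2 * dirD (D i) ξ x * g i x = 0

/-- Smoothness of the functions in a BKL datum. -/
def SmoothDatum (g : Fin 3 → R3 → ℝ) (ξ : R3 → ℝ) : Prop :=
  (∀ i, ContDiff ℝ (⊤ : ℕ∞) (g i)) ∧ ContDiff ℝ (⊤ : ℕ∞) ξ

/-- `B^f = exp (f · log B)`. -/
def bpow (B f : R3 → ℝ) : R3 → ℝ := fun x => Real.exp (f x * Real.log (B x))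

/-- The transformed frame `D̂ i = σ A B^(g j + g k) • D i`, `(i,j,k)` cyclic. -/
def confFrame (D : Fin 3 → R3 → R3) (g : Fin 3 → R3 → ℝ) (A B : R3 → ℝ) (σ : ℝ) :
    Fin 3 → R3 → R3 :=
  fun i x => (σ * A x * bpow B (fun y => g (i + 1) y + g (i + 2) y) x) • D i x


/-- `g₂³ = −c_{12}^1 − D₂(ξ)` (indices `1,2,3` are `0,1,2`). -/
def g23fn (D : Fin 3 → R3 → R3) (c : Fin 3 → Fin 3 → Fin 3 → R3 → ℝ) (ξ : R3 → ℝ) :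
    R3 → ℝ :=
  fun x => -c 0 1 0 x - dirD (D 1) ξ x

/-- `g₃⁴ = −c_{31}^1 + D₃(ξ)`. -/
def g34fn (D : Fin 3 → R3 → R3) (c : Fin 3 → Fin 3 → Fin 3 → R3 → ℝ) (ξ : R3 → ℝ) :
    R3 → ℝ :=
  fun x => -c 2 0 0 x + dirD (D 2) ξ x

/-- `D̃₁ = D₁ − (2 g₃⁴/(u−2)) D₂ + (2 u g₂³/(2u−1)) D₃`. -/
def tiltedD1 (D : Fin 3 → R3 → R3) (c : Fin 3 → Fin 3 → Fin 3 → R3 → ℝ)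
    (ξ u : R3 → ℝ) : R3 → R3 :=
  fun x => D 0 x - (2 * g34fn D c ξ x / (u x - 2)) • D 1 x
    + (2 * u x * g23fn D c ξ x / (2 * u x - 1)) • D 2 x

/-- Normal form: `(g₁,g₂,g₃) = (1/2, −(1+u)/2, −(1+1/u)/2)` and `c_{23}^1 = −2`. -/
def IsNormalForm (c : Fin 3 → Fin 3 → Fin 3 → R3 → ℝ)
    (g : Fin 3 → R3 → ℝ) (u : R3 → ℝ) : Prop :=
  ContDiff ℝ (⊤ : ℕ∞) u ∧ (∀ x : R3, 0 < u x) ∧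
    (∀ x : R3, g 0 x = 1 / 2) ∧ (∀ x : R3, g 1 x = -(1 + u x) / 2) ∧
    (∀ x : R3, g 2 x = -(1 + 1 / u x) / 2) ∧ ∀ x : R3, c 1 2 0 x = -2

/-! Rescaling the frame by `φ i` changes the structure functions by the Leibniz rule, so the
new `ĉ_{23}^1` is `(φ₂ φ₃ / φ₁) c_{23}^1 = σ A B^{2 g₁} c_{23}^1`. The first two weights force
`A` and `u`, and the constraint `g₂g₃ + g₃g₁ + g₁g₂ = 0` makes the third one automatic.
Since `c_{23}^1` has constant sign on the connected space `ℝ³`, `ĉ_{23}^1 = −2` fixes `σ`,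
and then `B^{2 g₁} = −2 / (σ A c_{23}^1) > 0` determines `B` because `g₁ ≠ 0`. -/

open Real

lemma ContDiff.dirD {X : R3 → R3} {f : R3 → ℝ} (hX : ContDiff ℝ (⊤ : ℕ∞) X)
    (hf : ContDiff ℝ (⊤ : ℕ∞) f) : ContDiff ℝ (⊤ : ℕ∞) (dirD X f) :=
  (hf.fderiv_right (by exact_mod_cast le_top)).clm_apply hX

lemma lieB_smul_smul {φ ψ : R3 → ℝ} {X Y : R3 → R3}
    (hφ : ContDiff ℝ (⊤ : ℕ∞) φ) (hψ : ContDiff ℝ (⊤ : ℕ∞) ψ)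
    (hX : ContDiff ℝ (⊤ : ℕ∞) X) (hY : ContDiff ℝ (⊤ : ℕ∞) Y) (x : R3) :
    lieB (fun y => φ y • X y) (fun y => ψ y • Y y) x
      = (φ x * ψ x) • lieB X Y x + (φ x * dirD X ψ x) • Y x
        - (ψ x * dirD Y φ x) • X x := by
  have hφd := (hφ.differentiable (by simp)).differentiableAt (x := x)
  have hψd := (hψ.differentiable (by simp)).differentiableAt (x := x)
  have hXd := (hX.differentiable (by simp)).differentiableAt (x := x)
  have hYd := (hY.differentiable (by simp)).differentiableAt (x := x)
  unfold lieB dirD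
  rw [fderiv_fun_smul hψd hYd, fderiv_fun_smul hφd hXd]
  simp only [add_apply, smul_apply, ContinuousLinearMap.smulRight_apply, map_smul]
  module

lemma IsStructFns.eq {D : Fin 3 → R3 → R3} {c c' : Fin 3 → Fin 3 → Fin 3 → R3 → ℝ}
    (hlin : ∀ x : R3, LinearIndependent ℝ fun i => D i x)
    (hc : IsStructFns D c) (hc' : IsStructFns D c') : c = c' := by
  funext j k i x
  have hdiff : ∑ l, (c j k l x - c' j k l x) • D l x = 0 := by
    simp only [sub_smul, Finset.sum_sub_distrib, ← hc.2 j k x, ← hc'.2 j k x, sub_self]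
  exact sub_eq_zero.mp (Fintype.linearIndependent_iff.mp (hlin x) _ hdiff i)

/-- From `[φ_j D_j, φ_k D_k] = φ_j φ_k [D_j, D_k] + φ_j D_j(φ_k) D_k − φ_k D_k(φ_j) D_j`. -/
def rescaledStructFns (D : Fin 3 → R3 → R3) (c : Fin 3 → Fin 3 → Fin 3 → R3 → ℝ)
    (φ : Fin 3 → R3 → ℝ) : Fin 3 → Fin 3 → Fin 3 → R3 → ℝ :=
  fun j k i x => (φ j x * φ k x * c j k i x
    + (if i = k then φ j x * dirD (D j) (φ k) x else 0)
    - (if i = j then φ k x * dirD (D k) (φ j) x else 0)) / φ i x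

section Rescaling

variable {D : Fin 3 → R3 → R3} {c : Fin 3 → Fin 3 → Fin 3 → R3 → ℝ} {φ : Fin 3 → R3 → ℝ}

lemma isStructFns_rescaledStructFns (hD : ∀ i, ContDiff ℝ (⊤ : ℕ∞) (D i))
    (hc : IsStructFns D c) (hφ : ∀ i, ContDiff ℝ (⊤ : ℕ∞) (φ i)) (hφ0 : ∀ i x, φ i x ≠ 0) :
    IsStructFns (fun i x => φ i x • D i x) (rescaledStructFns D c φ) := by
  refine ⟨fun j k i => ?_, fun j k x => ?_⟩
  · refine ContDiff.div (ContDiff.sub (ContDiff.add ?_ ?_) ?_) (hφ i) (hφ0 i)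
    · exact ((hφ j).mul (hφ k)).mul (hc.1 j k i)
    · split
      · exact (hφ j).mul ((hD j).dirD (hφ k))
      · exact contDiff_const
    · split
      · exact (hφ k).mul ((hD k).dirD (hφ j))
      · exact contDiff_const
  · rw [lieB_smul_smul (hφ j) (hφ k) (hD j) (hD k) x, hc.2 j k x]
    have hcoeff : ∀ i, rescaledStructFns D c φ j k i x * φ i x
        = φ j x * φ k x * c j k i x
          + (if i = k then φ j x * dirD (D j) (φ k) x else 0)
          - (if i = j then φ k x * dirD (D k) (φ j) x else 0) := fun i =>
      div_mul_cancel₀ _ (hφ0 i x)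
    simp only [smul_smul, hcoeff, sub_smul, add_smul, ite_smul, zero_smul,
      Finset.sum_sub_distrib, Finset.sum_add_distrib, Finset.sum_ite_eq',
      Finset.mem_univ, if_true, Finset.smul_sum]

lemma IsStructFns.eq_rescaledStructFns {c' : Fin 3 → Fin 3 → Fin 3 → R3 → ℝ}
    (hc' : IsStructFns (fun i x => φ i x • D i x) c') (hD : IsFrame D) (hc : IsStructFns D c)
    (hφ : ∀ i, ContDiff ℝ (⊤ : ℕ∞) (φ i)) (hφ0 : ∀ i x, φ i x ≠ 0) :
    c' = rescaledStructFns D c φ := by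
  refine hc'.eq (fun x => ?_) (isStructFns_rescaledStructFns hD.1 hc hφ hφ0)
  exact (hD.2 x).units_smul fun i => Units.mk0 (φ i x) (hφ0 i x)

lemma rescaledStructFns_one_two_zero (x : R3) :
    rescaledStructFns D c φ 1 2 0 x = φ 1 x * φ 2 x * c 1 2 0 x / φ 0 x := by
  simp [rescaledStructFns]

end Rescaling

lemma exists_sign_mul_neg {X : Type*} [TopologicalSpace X] [PreconnectedSpace X] [Nonempty X]
    {f : X → ℝ} (hf : Continuous f) (hf0 : ∀ x, f x ≠ 0) :
    ∃ σ : ℝ, (σ = 1 ∨ σ = -1) ∧ ∀ x, σ * f x < 0 := by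
  have hsame : ∀ x y, 0 < f x * f y := by
    intro x y
    by_contra! h
    obtain ⟨z, hz⟩ : (0 : ℝ) ∈ Set.range f := by
      rcases mul_nonpos_iff.mp h with ⟨hx, hy⟩ | ⟨hx, hy⟩
      · exact mem_range_of_exists_le_of_exists_ge hf ⟨y, hy⟩ ⟨x, hx⟩
      · exact mem_range_of_exists_le_of_exists_ge hf ⟨x, hx⟩ ⟨y, hy⟩
    exact hf0 z hz
  obtain ⟨x₀⟩ := ‹Nonempty X›
  rcases (hf0 x₀).lt_or_gt with h | h
  · exact ⟨1, Or.inl rfl, fun x => by nlinarith [hsame x₀ x]⟩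
  · exact ⟨-1, Or.inr rfl, fun x => by nlinarith [hsame x₀ x]⟩

lemma eq_of_sign_mul_eq {σ σ' a a' : ℝ} (hσ : σ = 1 ∨ σ = -1) (hσ' : σ' = 1 ∨ σ' = -1)
    (ha : 0 < a) (ha' : 0 < a') (h : σ * a = σ' * a') : σ = σ' ∧ a = a' := by
  rcases hσ with rfl | rfl <;> rcases hσ' with rfl | rfl <;> constructor <;> linarith

lemma exists_bpow_eq {f t : R3 → ℝ} (hf : ContDiff ℝ (⊤ : ℕ∞) f) (hf0 : ∀ x, f x ≠ 0)
    (ht : ContDiff ℝ (⊤ : ℕ∞) t) (ht0 : ∀ x, 0 < t x) :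
    ∃ B : R3 → ℝ, ContDiff ℝ (⊤ : ℕ∞) B ∧ (∀ x, 0 < B x) ∧ ∀ x, bpow B f x = t x := by
  refine ⟨fun x => exp (log (t x) / f x), ((ht.log fun x => (ht0 x).ne').div hf hf0).exp,
    fun x => exp_pos _, fun x => ?_⟩
  simp only [bpow, log_exp, mul_div_cancel₀ _ (hf0 x), exp_log (ht0 x)]

lemma eq_of_bpow_eq {f B B' : R3 → ℝ} {x : R3} (hf : f x ≠ 0) (hB : 0 < B x) (hB' : 0 < B' x)
    (h : bpow B f x = bpow B' f x) : B x = B' x :=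
  log_injOn_pos hB hB' (mul_left_cancel₀ hf (exp_injective h))

def confScale (g : Fin 3 → R3 → ℝ) (A B : R3 → ℝ) (σ : ℝ) : Fin 3 → R3 → ℝ :=
  fun i x => σ * A x * bpow B (fun y => g (i + 1) y + g (i + 2) y) x

section ConformalRescaling

variable {D : Fin 3 → R3 → R3} {c : Fin 3 → Fin 3 → Fin 3 → R3 → ℝ} {g : Fin 3 → R3 → ℝ}
  {A B : R3 → ℝ} {σ : ℝ}

lemma contDiff_confScale (hg : ∀ i, ContDiff ℝ (⊤ : ℕ∞) (g i)) (hA : ContDiff ℝ (⊤ : ℕ∞) A)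
    (hB : ContDiff ℝ (⊤ : ℕ∞) B) (hB0 : ∀ x, 0 < B x) (i : Fin 3) :
    ContDiff ℝ (⊤ : ℕ∞) (confScale g A B σ i) :=
  (contDiff_const.mul hA).mul
    ((((hg (i + 1)).add (hg (i + 2))).mul (hB.log fun x => (hB0 x).ne')).exp)

lemma confScale_ne_zero (hσ : σ ≠ 0) (hA0 : ∀ x, A x ≠ 0) (i : Fin 3) (x : R3) :
    confScale g A B σ i x ≠ 0 :=
  mul_ne_zero (mul_ne_zero hσ (hA0 x)) (exp_pos _).ne'

/-- The exponents combine as `(g₃ + g₁) + (g₁ + g₂) − (g₂ + g₃) = 2 g₁`. -/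
lemma confScale_mul_div (hσ : σ ≠ 0) (hA0 : ∀ x, A x ≠ 0) (x : R3) :
    confScale g A B σ 1 x * confScale g A B σ 2 x / confScale g A B σ 0 x
      = σ * A x * bpow B (fun y => 2 * g 0 y) x := by
  rw [div_eq_iff (confScale_ne_zero hσ hA0 0 x)]
  simp only [confScale, bpow]
  have hexp : exp ((g 2 x + g 0 x) * log (B x)) * exp ((g 0 x + g 1 x) * log (B x))
      = exp (2 * g 0 x * log (B x)) * exp ((g 1 x + g 2 x) * log (B x)) := by
    rw [← exp_add, ← exp_add]; ring_nf
  have hidx : ((1 + 1 : Fin 3), (1 + 2 : Fin 3), (2 + 1 : Fin 3), (2 + 2 : Fin 3),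
      (0 + 1 : Fin 3), (0 + 2 : Fin 3)) = (2, 0, 0, 1, 1, 2) := rfl
  simp only [Prod.mk.injEq] at hidx
  simp only [hidx]
  linear_combination (σ * A x * σ * A x) * hexp

lemma confFrame_structFns_one_two_zero {ĉ : Fin 3 → Fin 3 → Fin 3 → R3 → ℝ}
    (hD : IsFrame D) (hc : IsStructFns D c) (hg : ∀ i, ContDiff ℝ (⊤ : ℕ∞) (g i))
    (hA : ContDiff ℝ (⊤ : ℕ∞) A) (hA0 : ∀ x, A x ≠ 0)
    (hB : ContDiff ℝ (⊤ : ℕ∞) B) (hB0 : ∀ x, 0 < B x) (hσ : σ ≠ 0)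
    (hĉ : IsStructFns (confFrame D g A B σ) ĉ) (x : R3) :
    ĉ 1 2 0 x = σ * A x * bpow B (fun y => 2 * g 0 y) x * c 1 2 0 x := by
  rw [hĉ.eq_rescaledStructFns (φ := confScale g A B σ) hD hc
      (contDiff_confScale hg hA hB hB0) (confScale_ne_zero hσ hA0),
    rescaledStructFns_one_two_zero, ← confScale_mul_div hσ hA0 x]
  ring

end ConformalRescaling

def IsNormalizing (D : Fin 3 → R3 → R3) (g : Fin 3 → R3 → ℝ) (A B : R3 → ℝ) (σ : ℝ)
    (u : R3 → ℝ) : Prop :=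
  ContDiff ℝ (⊤ : ℕ∞) A ∧ (∀ x : R3, 0 < A x) ∧
    ContDiff ℝ (⊤ : ℕ∞) B ∧ (∀ x : R3, 0 < B x) ∧ (σ = 1 ∨ σ = -1) ∧
    ContDiff ℝ (⊤ : ℕ∞) u ∧ (∀ x : R3, 0 < u x) ∧
    (∀ x : R3, A x * g 0 x = 1 / 2) ∧
    (∀ x : R3, A x * g 1 x = -(1 + u x) / 2) ∧
    (∀ x : R3, A x * g 2 x = -(1 + 1 / u x) / 2) ∧
    ∀ chat : Fin 3 → Fin 3 → Fin 3 → R3 → ℝ,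
      IsStructFns (confFrame D g A B σ) chat → ∀ x : R3, chat 1 2 0 x = -2

namespace IsNormalizing

variable {D : Fin 3 → R3 → R3} {c : Fin 3 → Fin 3 → Fin 3 → R3 → ℝ} {g : Fin 3 → R3 → ℝ}
  {A B u : R3 → ℝ} {σ : ℝ}

lemma A_eq (h : IsNormalizing D g A B σ u) {x : R3} (hg0 : g 0 x ≠ 0) :
    A x = 1 / (2 * g 0 x) := by
  rw [eq_div_iff (mul_ne_zero two_ne_zero hg0)]
  linear_combination 2 * h.2.2.2.2.2.2.2.1 x

lemma u_eq (h : IsNormalizing D g A B σ u) {x : R3} (hg0 : g 0 x ≠ 0) :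
    u x = -(g 0 x + g 1 x) / g 0 x := by
  rw [eq_div_iff hg0]
  linear_combination 2 * g 0 x * h.2.2.2.2.2.2.2.2.1 x - 2 * g 1 x * h.2.2.2.2.2.2.2.1 x

lemma sign_mul_bpow_eq (h : IsNormalizing D g A B σ u) (hD : IsFrame D)
    (hc : IsStructFns D c) (hg : ∀ i, ContDiff ℝ (⊤ : ℕ∞) (g i)) (x : R3) :
    σ * A x * bpow B (fun y => 2 * g 0 y) x * c 1 2 0 x = -2 := by
  obtain ⟨hA, hA0, hB, hB0, hσ, -, -, -, -, -, hĉ⟩ := h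
  have hσ0 : σ ≠ 0 := by rcases hσ with rfl | rfl <;> norm_num
  have hA0' : ∀ x, A x ≠ 0 := fun x => (hA0 x).ne'
  have hstruct := isStructFns_rescaledStructFns hD.1 hc (contDiff_confScale hg hA hB hB0)
    (confScale_ne_zero (g := g) (B := B) hσ0 hA0')
  rw [← confFrame_structFns_one_two_zero hD hc hg hA hA0' hB hB0 hσ0 hstruct x]
  exact hĉ _ hstruct x

lemma unique {A' B' u' : R3 → ℝ} {σ' : ℝ} (h : IsNormalizing D g A B σ u)
    (h' : IsNormalizing D g A' B' σ' u') (hD : IsFrame D) (hc : IsStructFns D c)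
    (hg : ∀ i, ContDiff ℝ (⊤ : ℕ∞) (g i)) (hg0 : ∀ x, g 0 x ≠ 0) (hc23 : ∀ x, c 1 2 0 x ≠ 0) :
    A = A' ∧ B = B' ∧ σ = σ' := by
  have hA : A = A' := funext fun x => (h.A_eq (hg0 x)).trans (h'.A_eq (hg0 x)).symm
  subst hA
  have hsign : ∀ x, σ * bpow B (fun y => 2 * g 0 y) x = σ' * bpow B' (fun y => 2 * g 0 y) x :=
    fun x => mul_left_cancel₀ (mul_ne_zero (h.2.1 x).ne' (hc23 x)) <| by
      linear_combination h.sign_mul_bpow_eq hD hc hg x - h'.sign_mul_bpow_eq hD hc hg x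
  have hsame x := eq_of_sign_mul_eq h.2.2.2.2.1 h'.2.2.2.2.1 (exp_pos _) (exp_pos _) (hsign x)
  refine ⟨rfl, funext fun x => ?_, (hsame 0).1⟩
  exact eq_of_bpow_eq (f := fun y => 2 * g 0 y) (mul_ne_zero two_ne_zero (hg0 x))
    (h.2.2.2.1 x) (h'.2.2.2.1 x) (hsame x).2

end IsNormalizing

lemma exists_isNormalizing {D : Fin 3 → R3 → R3} {c : Fin 3 → Fin 3 → Fin 3 → R3 → ℝ}
    {g : Fin 3 → R3 → ℝ} (hD : IsFrame D) (hc : IsStructFns D c)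
    (hg : ∀ i, ContDiff ℝ (⊤ : ℕ∞) (g i))
    (hq : ∀ x, g 1 x * g 2 x + g 2 x * g 0 x + g 0 x * g 1 x = 0)
    (hg0 : ∀ x, 0 < g 0 x) (hg1 : ∀ x, g 1 x < 0) (hg2 : ∀ x, g 2 x < 0)
    (hc23 : ∀ x, c 1 2 0 x ≠ 0) :
    ∃ A B σ u, IsNormalizing D g A B σ u := by
  have hg0' x : g 0 x ≠ 0 := (hg0 x).ne'
  have h2g0 x : 2 * g 0 x ≠ 0 := mul_ne_zero two_ne_zero (hg0' x)
  -- `g₃ (g₁ + g₂) = −g₁ g₂ > 0` with `g₃ < 0`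
  have hsum x : g 0 x + g 1 x < 0 := by nlinarith [hq x, hg0 x, hg1 x, hg2 x]
  obtain ⟨σ, hσ, hσc⟩ := exists_sign_mul_neg (hc.1 1 2 0).continuous hc23
  set A : R3 → ℝ := fun x => 1 / (2 * g 0 x) with hA_def
  have hA0 x : 0 < A x := one_div_pos.mpr (by linarith [hg0 x])
  have hA : ContDiff ℝ (⊤ : ℕ∞) A := contDiff_const.div (contDiff_const.mul (hg 0)) h2g0
  have hσAc x : σ * A x * c 1 2 0 x < 0 := by
    rw [mul_right_comm]; exact mul_neg_of_neg_of_pos (hσc x) (hA0 x)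
  obtain ⟨B, hB, hB0, hBt⟩ := exists_bpow_eq (contDiff_const.mul (hg 0)) h2g0
    (t := fun x => -2 / (σ * A x * c 1 2 0 x))
    (contDiff_const.div ((contDiff_const.mul hA).mul (hc.1 1 2 0)) fun x => (hσAc x).ne)
    fun x => div_pos_of_neg_of_neg (by norm_num) (hσAc x)
  refine ⟨A, B, σ, fun x => -(g 0 x + g 1 x) / g 0 x, hA, hA0, hB, hB0, hσ,
    ((hg 0).add (hg 1)).neg.div (hg 0) hg0', fun x => div_pos (by linarith [hsum x]) (hg0 x),
    fun x => ?_, fun x => ?_, fun x => ?_, fun ĉ hĉ x => ?_⟩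
  · have := hg0' x
    simp only [hA_def]
    field_simp
  · have := hg0' x
    simp only [hA_def]
    field_simp
    ring
  · have := hg0' x
    have := (hsum x).ne
    simp only [hA_def]
    field_simp
    linear_combination hq x
  · have hσ0 : σ ≠ 0 := by rcases hσ with rfl | rfl <;> norm_num
    rw [confFrame_structFns_one_two_zero hD hc hg hA (fun x => (hA0 x).ne') hB hB0 hσ0 hĉ x,
      hBt x]
    field_simp [(hA0 x).ne', hc23 x]

/-- normalization.  If `g₁ > 0`, `g₂ < 0`, `g₃ < 0` and `c_(23)^1 ≠ 0`
everywhere, then there are unique `A, B > 0` and `σ = ±1` such that the transformed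
datum is in normal form; necessarily `A = 1/(2g₁)` and `u = −(g₁+g₂)/g₁`. -/
theorem bkl_normalization
    (D : Fin 3 → R3 → R3) (c : Fin 3 → Fin 3 → Fin 3 → R3 → ℝ)
    (g : Fin 3 → R3 → ℝ) (ξ : R3 → ℝ)
    (hD : IsFrame D) (hc : IsStructFns D c) (hgξ : SmoothDatum g ξ)
    (hcon : BKLConstraints D c g ξ)
    (hg0 : ∀ x : R3, 0 < g 0 x) (hg1 : ∀ x : R3, g 1 x < 0) (hg2 : ∀ x : R3, g 2 x < 0)
    (hc23 : ∀ x : R3, c 1 2 0 x ≠ 0) :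
    (∃ (A B : R3 → ℝ) (σ : ℝ) (u : R3 → ℝ), (fun (A B : R3 → ℝ) (σ : ℝ) (u : R3 → ℝ) =>
      ContDiff ℝ (⊤ : ℕ∞) A ∧ (∀ x : R3, 0 < A x) ∧
      ContDiff ℝ (⊤ : ℕ∞) B ∧ (∀ x : R3, 0 < B x) ∧ (σ = 1 ∨ σ = -1) ∧
      ContDiff ℝ (⊤ : ℕ∞) u ∧ (∀ x : R3, 0 < u x) ∧
      (∀ x : R3, A x * g 0 x = 1 / 2) ∧
      (∀ x : R3, A x * g 1 x = -(1 + u x) / 2) ∧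
      (∀ x : R3, A x * g 2 x = -(1 + 1 / u x) / 2) ∧
      ∀ chat : Fin 3 → Fin 3 → Fin 3 → R3 → ℝ,
        IsStructFns (confFrame D g A B σ) chat → ∀ x : R3, chat 1 2 0 x = -2) A B σ u) ∧
    (∀ (A B : R3 → ℝ) (σ : ℝ) (u : R3 → ℝ) (A' B' : R3 → ℝ) (σ' : ℝ) (u' : R3 → ℝ),
      (fun (A B : R3 → ℝ) (σ : ℝ) (u : R3 → ℝ) =>
      ContDiff ℝ (⊤ : ℕ∞) A ∧ (∀ x : R3, 0 < A x) ∧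
      ContDiff ℝ (⊤ : ℕ∞) B ∧ (∀ x : R3, 0 < B x) ∧ (σ = 1 ∨ σ = -1) ∧
      ContDiff ℝ (⊤ : ℕ∞) u ∧ (∀ x : R3, 0 < u x) ∧
      (∀ x : R3, A x * g 0 x = 1 / 2) ∧
      (∀ x : R3, A x * g 1 x = -(1 + u x) / 2) ∧
      (∀ x : R3, A x * g 2 x = -(1 + 1 / u x) / 2) ∧
      ∀ chat : Fin 3 → Fin 3 → Fin 3 → R3 → ℝ,
        IsStructFns (confFrame D g A B σ) chat → ∀ x : R3, chat 1 2 0 x = -2) A B σ u → (fun (A B : R3 → ℝ) (σ : ℝ) (u : R3 → ℝ) =>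
      ContDiff ℝ (⊤ : ℕ∞) A ∧ (∀ x : R3, 0 < A x) ∧
      ContDiff ℝ (⊤ : ℕ∞) B ∧ (∀ x : R3, 0 < B x) ∧ (σ = 1 ∨ σ = -1) ∧
      ContDiff ℝ (⊤ : ℕ∞) u ∧ (∀ x : R3, 0 < u x) ∧
      (∀ x : R3, A x * g 0 x = 1 / 2) ∧
      (∀ x : R3, A x * g 1 x = -(1 + u x) / 2) ∧
      (∀ x : R3, A x * g 2 x = -(1 + 1 / u x) / 2) ∧
      ∀ chat : Fin 3 → Fin 3 → Fin 3 → R3 → ℝ,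
        IsStructFns (confFrame D g A B σ) chat → ∀ x : R3, chat 1 2 0 x = -2) A' B' σ' u' → A = A' ∧ B = B' ∧ σ = σ') ∧
    (∀ (A B : R3 → ℝ) (σ : ℝ) (u : R3 → ℝ), (fun (A B : R3 → ℝ) (σ : ℝ) (u : R3 → ℝ) =>
      ContDiff ℝ (⊤ : ℕ∞) A ∧ (∀ x : R3, 0 < A x) ∧
      ContDiff ℝ (⊤ : ℕ∞) B ∧ (∀ x : R3, 0 < B x) ∧ (σ = 1 ∨ σ = -1) ∧
      ContDiff ℝ (⊤ : ℕ∞) u ∧ (∀ x : R3, 0 < u x) ∧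
      (∀ x : R3, A x * g 0 x = 1 / 2) ∧
      (∀ x : R3, A x * g 1 x = -(1 + u x) / 2) ∧
      (∀ x : R3, A x * g 2 x = -(1 + 1 / u x) / 2) ∧
      ∀ chat : Fin 3 → Fin 3 → Fin 3 → R3 → ℝ,
        IsStructFns (confFrame D g A B σ) chat → ∀ x : R3, chat 1 2 0 x = -2) A B σ u →
      (∀ x : R3, A x = 1 / (2 * g 0 x)) ∧
      ∀ x : R3, u x = -(g 0 x + g 1 x) / g 0 x) := by
  have hg0' x : g 0 x ≠ 0 := (hg0 x).ne'
  exact ⟨exists_isNormalizing hD hc hgξ.1 hcon.1 hg0 hg1 hg2 hc23,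
    fun _ _ _ _ _ _ _ _ h h' => IsNormalizing.unique h h' hD hc hgξ.1 hg0' hc23,
    fun _ _ _ _ h => ⟨fun x => IsNormalizing.A_eq h (hg0' x),
      fun x => IsNormalizing.u_eq h (hg0' x)⟩⟩
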